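/- Under the multimodal spurious bias conditions p(u_s | u₁) ≥ 1 − ε, p(u_s | v) ≥ 1 − ε, p(u₂ | v) ≤ ε, and independence of (u₁, u_s) from v, with p(u₁) > 2ε and ε < 1/4, the ratio p(u₁ | v)/p(u₂ | v) exceeds 1, i.e., the model's prediction on v is biased toward class c₁ rather than the true class c₂. -/
import Mathlib


open MeasureTheory

/-- Conditional probability `p(A | B)` as a real number, with the convention `0` when
`p(B) = 0`. -/
noncomputable def condP {Ω : Type*} [MeasurableSpace Ω] (μ : Measure Ω) (A B : Set Ω) : ℝ :=
  (μ (A ∩ B)).toReal / (μ B).toReal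

/-- Under the multimodal spurious bias conditions `p(u_s | u₁) ≥ 1 − ε`,
`p(u_s | v) ≥ 1 − ε`, `p(u₂ | v) ≤ ε`, and independence of `(u₁, u_s)` from `v`,
with `p(u₁) > 2ε` and `ε < 1/4`, the ratio `p(u₁ | v) / p(u₂ | v)` exceeds `1`:
the model's prediction on `v` is biased toward class `c₁` rather than the true class `c₂`. -/
theorem biased_prediction {Ω : Type*} [MeasurableSpace Ω] (μ : Measure Ω)
    [IsProbabilityMeasure μ] (u₁ u₂ us v : Set Ω)
    (hu₁ : MeasurableSet u₁) (hu₂ : MeasurableSet u₂) (hus : MeasurableSet us)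
    (hv : MeasurableSet v)
    (ε : ℝ) (hε0 : 0 ≤ ε) (hε : ε < 1 / 4)
    (hvpos : (μ v).toReal > 0)
    (hvuspos : (μ (v ∩ us)).toReal > 0)
    (hu₁pos : (μ u₁).toReal > 0)
    (hu₂vpos : (μ (u₂ ∩ v)).toReal > 0)
    (h_us_u₁ : condP μ us u₁ ≥ 1 - ε)
    (h_us_v : condP μ us v ≥ 1 - ε)
    (h_u₂_v : condP μ u₂ v ≤ ε)
    (hindep : (μ (u₁ ∩ us ∩ v)).toReal = (μ (u₁ ∩ us)).toReal * (μ v).toReal)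
    (hu₁big : (μ u₁).toReal > 2 * ε) :
    condP μ u₁ v / condP μ u₂ v > 1 := by
  have hc2pos : condP μ u₂ v > 0 := div_pos hu₂vpos hvpos
  have hεpos : 0 < ε := lt_of_lt_of_le hc2pos h_u₂_v
  have h1 : (μ (us ∩ u₁)).toReal ≥ (1 - ε) * (μ u₁).toReal := by
    unfold condP at h_us_u₁
    rw [ge_iff_le, le_div_iff₀ hu₁pos] at h_us_u₁
    linarith
  have hcomm : (μ (u₁ ∩ us)).toReal = (μ (us ∩ u₁)).toReal := by
    rw [Set.inter_comm]
  have h2 : (μ (u₁ ∩ v)).toReal ≥ (μ (u₁ ∩ us ∩ v)).toReal :=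
    ENNReal.toReal_mono (measure_ne_top μ _)
      (measure_mono (Set.inter_subset_inter_left v Set.inter_subset_left))
  have h3 : condP μ u₁ v ≥ (1 - ε) * (μ u₁).toReal := by
    unfold condP
    rw [ge_iff_le, le_div_iff₀ hvpos]
    calc (1 - ε) * (μ u₁).toReal * (μ v).toReal
        ≤ (μ (us ∩ u₁)).toReal * (μ v).toReal := by
          apply mul_le_mul_of_nonneg_right h1 (le_of_lt hvpos)
      _ = (μ (u₁ ∩ us ∩ v)).toReal := by rw [hindep, hcomm]
      _ ≤ (μ (u₁ ∩ v)).toReal := h2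
  have key : condP μ u₁ v > condP μ u₂ v := by
    have : (1 - ε) * (μ u₁).toReal > ε := by nlinarith
    linarith
  rw [gt_iff_lt, lt_div_iff₀ hc2pos, one_mul]
  exact key
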